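/- Let K be an admissible kernel and let g ∈ L^∞(ℝⁿ) be ℤⁿ-periodic with ∫_Q g(x) dx = 0 and ‖g‖_{L^∞(ℝⁿ)} ≤ κ₃/2. Then for every measurable set F ⊆ ℝⁿ and every R > 1 one has 𝔈(F, B_R) := ∬_{B_R×ℝⁿ} χ_F(x) χ_{F^c}(y) K(x,y) dx dy + ∫_{𝒬(B_R)₁ ∩ F} g(x) dx ≥ 0. -/

import Mathlib

open MeasureTheory ENNReal Filter Metric
open scoped RealInnerProductSpace Pointwise Topology NNReal

noncomputable section

abbrev Euc (n : ℕ) := EuclideanSpace ℝ (Fin n)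

/-- The open unit cube `(0,1)^n` in `ℝⁿ`. -/
def Qcube (n : ℕ) : Set (Euc n) := {x | ∀ i, x i ∈ Set.Ioo (0 : ℝ) 1}

/-- The centered open unit cube `(-1/2,1/2)^n` in `ℝⁿ`. -/
def QcubeC (n : ℕ) : Set (Euc n) := {x | ∀ i, x i ∈ Set.Ioo (-(1 : ℝ) / 2) (1 / 2)}

/-- The vector of `ℝⁿ` with integer coordinates given by `k : ℤⁿ`. -/
def intVec {n : ℕ} (k : Fin n → ℤ) : Euc n :=
  (WithLp.equiv 2 (Fin n → ℝ)).symm fun i => (k i : ℝ)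

/-- `ℤⁿ`-periodicity of a function on `ℝⁿ`. -/
def ZPeriodic {n : ℕ} (f : Euc n → ℝ) : Prop :=
  ∀ (k : Fin n → ℤ) (x : Euc n), f (x + intVec k) = f x

/-- An admissible kernel: nonnegative, symmetric, translation and rotation invariant,
with first-moment integrability, the two-sided fractional bounds, and a positive
lower bound on `Q × Q`. -/
structure IsAdmissibleKernel (n : ℕ) (s₁ s₂ δ κ₁ κ₂ κ₃ : ℝ)
    (K : Euc n → Euc n → ℝ) : Prop where
  nonneg : ∀ x y, 0 ≤ K x y
  symm : ∀ x y, K x y = K y x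
  transl : ∀ x y w, K (x + w) (y + w) = K x y
  rot : ∀ (R : Euc n ≃ₗᵢ[ℝ] Euc n) (x y : Euc n), K (R x) (R y) = K x y
  int_fin : (∫⁻ h : Euc n, ENNReal.ofReal (‖h‖ * K h 0)) < ⊤
  s₁_pos : 0 < s₁
  s₁_lt : s₁ < 1 / 2
  s₂_gt : 1 / 2 < s₂
  s₂_lt : s₂ < 1
  δ_pos : 0 < δ
  κ₁_pos : 0 < κ₁
  κ₂_pos : 0 < κ₂
  κ₃_pos : 0 < κ₃
  κ₁_le_κ₂ : κ₁ ≤ κ₂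
  lower : ∀ x y : Euc n, 0 < ‖x - y‖ → ‖x - y‖ < δ →
    κ₁ / ‖x - y‖ ^ ((n : ℝ) + 2 * s₁) ≤ K x y
  upper : ∀ x y : Euc n, x ≠ y →
    K x y ≤ κ₂ * min (1 / ‖x - y‖ ^ ((n : ℝ) + 2 * s₁)) (1 / ‖x - y‖ ^ ((n : ℝ) + 2 * s₂))
  lowerQ : ∀ x ∈ Qcube n, ∀ y ∈ Qcube n, κ₃ ≤ K x y

/-- The class `𝒲` of locally integrable, `ℤⁿ`-periodic functions with zero average on `Q`. -/
def MemW {n : ℕ} (u : Euc n → ℝ) : Prop :=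
  MeasureTheory.LocallyIntegrable u volume ∧ ZPeriodic u ∧ (∫ x in Qcube n, u x) = 0

/-- The cell energy `𝔈ₚ(u)`, valued in `EReal`. -/
def cellEnergy {n : ℕ} (K : Euc n → Euc n → ℝ) (g : Euc n → ℝ) (p : Euc n)
    (u : Euc n → ℝ) : EReal :=
  ((∫⁻ x in Qcube n, ∫⁻ y : Euc n,
      ENNReal.ofReal (|u x - u y + ⟪p, x - y⟫| / 2 * K x y) : ℝ≥0∞) : EReal)
    + (((∫ x in Qcube n, g x * u x) : ℝ) : EReal)

/-- `u` is a minimizer of the cell energy `𝔈ₚ` over `𝒲`. -/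
def IsCellMinimizer {n : ℕ} (K : Euc n → Euc n → ℝ) (g : Euc n → ℝ) (p : Euc n)
    (u : Euc n → ℝ) : Prop :=
  MemW u ∧ ∀ w : Euc n → ℝ, MemW w → cellEnergy K g p u ≤ cellEnergy K g p w

/-- Real-valued indicator function of a set. -/
def setInd {n : ℕ} (E : Set (Euc n)) (x : Euc n) : ℝ := Set.indicator E (fun _ => (1 : ℝ)) x

/-- `Ω_♯ = (Ω×Ω) ∪ (Ωᶜ×Ω) ∪ (Ω×Ωᶜ)`. -/
def sharpSet {n : ℕ} (Ω : Set (Euc n)) : Set (Euc n × Euc n) :=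
  (Ω ×ˢ Ω) ∪ (Ωᶜ ×ˢ Ω) ∪ (Ω ×ˢ Ωᶜ)

/-- The `K`-nonlocal perimeter of `E` relative to `Ω`. -/
def perK {n : ℕ} (K : Euc n → Euc n → ℝ) (E Ω : Set (Euc n)) : ℝ≥0∞ :=
  ∫⁻ q in sharpSet Ω, ENNReal.ofReal (|setInd E q.1 - setInd E q.2| / 2 * K q.1 q.2)

/-- The functional `J(E,Ω) = P_K(E,Ω) + ∫_{E∩Ω} g`. -/
def energyJ {n : ℕ} (K : Euc n → Euc n → ℝ) (g : Euc n → ℝ) (E Ω : Set (Euc n)) : EReal :=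
  (perK K E Ω : EReal) + (((∫ x in E ∩ Ω, g x) : ℝ) : EReal)

/-- Class-A minimality for `J`. -/
def IsClassAMinimizer {n : ℕ} (K : Euc n → Euc n → ℝ) (g : Euc n → ℝ)
    (E : Set (Euc n)) : Prop :=
  ∀ Ω : Set (Euc n), IsOpen Ω → Bornology.IsBounded Ω →
    ∀ F : Set (Euc n), MeasurableSet F → F \ Ω = E \ Ω →
      energyJ K g E Ω ≤ energyJ K g F Ω

/-- Integer translate `k + Q` of the unit cube. -/
def cubeTrans {n : ℕ} (k : Fin n → ℤ) : Set (Euc n) := (fun x => x + intVec k) '' Qcube n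

/-- `𝒬(Ω)₁`: the union of the integer translates of the unit cube contained in `Ω`. -/
def unitCubes (n : ℕ) (Ω : Set (Euc n)) : Set (Euc n) :=
  ⋃ k ∈ {k : Fin n → ℤ | cubeTrans k ⊆ Ω}, cubeTrans k

/-- The functional `ℱ(E,Ω) = P_K(E,Ω) + ∫_{E∩𝒬(Ω)₁} g`. -/
def energyF {n : ℕ} (K : Euc n → Euc n → ℝ) (g : Euc n → ℝ) (E Ω : Set (Euc n)) : EReal :=
  (perK K E Ω : EReal) + (((∫ x in E ∩ unitCubes n Ω, g x) : ℝ) : EReal)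

/-- Rescaled kernel `K_ε(x,y) = ε^{-n-1} K(x/ε, y/ε)`. -/
def Keps {n : ℕ} (K : Euc n → Euc n → ℝ) (ε : ℝ) : Euc n → Euc n → ℝ :=
  fun x y => ε ^ (-(n : ℝ) - 1) * K (ε⁻¹ • x) (ε⁻¹ • y)

/-- Rescaled forcing term `g_ε(x) = ε⁻¹ g(x/ε)`. -/
def geps {n : ℕ} (g : Euc n → ℝ) (ε : ℝ) : Euc n → ℝ := fun x => ε⁻¹ * g (ε⁻¹ • x)

/-- The rescaled cube `ε(k + Q)`. -/
def cubeTransEps {n : ℕ} (ε : ℝ) (k : Fin n → ℤ) : Set (Euc n) :=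
  (fun x => ε • (x + intVec k)) '' Qcube n

/-- `𝒬(Ω)_ε`: the union of the cubes `ε(k+Q)` contained in `Ω`. -/
def unitCubesEps (n : ℕ) (ε : ℝ) (Ω : Set (Euc n)) : Set (Euc n) :=
  ⋃ k ∈ {k : Fin n → ℤ | cubeTransEps ε k ⊆ Ω}, cubeTransEps ε k

/-- The rescaled functional `ℱ_ε(E,Ω) = P_{K_ε}(E,Ω) + ∫_{𝒬(Ω)_ε ∩ E} g_ε`. -/
def energyFeps {n : ℕ} (K : Euc n → Euc n → ℝ) (g : Euc n → ℝ) (ε : ℝ)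
    (E Ω : Set (Euc n)) : EReal :=
  (perK (Keps K ε) E Ω : EReal) + (((∫ x in unitCubesEps n ε Ω ∩ E, geps g ε x) : ℝ) : EReal)

/-- A planelike minimizer for `J` in direction `p` (a unit vector), with width `M`. -/
def IsPlanelike {n : ℕ} (K : Euc n → Euc n → ℝ) (g : Euc n → ℝ) (p : Euc n) (M : ℝ)
    (E : Set (Euc n)) : Prop :=
  IsClassAMinimizer K g E ∧
    (({x : Euc n | ⟪x, p⟫ ≤ -M} ⊆ E ∧ E ⊆ {x : Euc n | ⟪x, p⟫ ≤ M}) ∨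
      ({x : Euc n | M ≤ ⟪x, p⟫} ⊆ E ∧ E ⊆ {x : Euc n | -M ≤ ⟪x, p⟫}))

/-- An open set has Lipschitz boundary: near every boundary point, after choosing a unit
direction `ν`, the set coincides locally with the subgraph of a Lipschitz function of the
tangential component. -/
def HasLipschitzBoundary {n : ℕ} (Ω : Set (Euc n)) : Prop :=
  ∀ x₀ ∈ frontier Ω, ∃ ν : Euc n, ‖ν‖ = 1 ∧
    ∃ r : ℝ, 0 < r ∧ ∃ (L : ℝ≥0) (φ : Euc n → ℝ), LipschitzWith L φ ∧
      ∀ x ∈ Metric.ball x₀ r,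
        (x ∈ Ω ↔ ⟪x - x₀, ν⟫ < φ (x - x₀ - ⟪x - x₀, ν⟫ • ν))

/-- The essential oscillation over the unit cube `Q`. -/
def oscQ {n : ℕ} (φ : Euc n → ℝ) : ℝ :=
  essSup φ (volume.restrict (Qcube n)) - essInf φ (volume.restrict (Qcube n))

/-- `(Λ,ξ)`-minimality for the perimeter `P_K` in `Ω`. -/
def IsAlmostMinimal {n : ℕ} (K : Euc n → Euc n → ℝ) (Λ ξ : ℝ) (E Ω : Set (Euc n)) : Prop :=
  ∀ F : Set (Euc n), MeasurableSet F → F \ Ω = E \ Ω →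
    perK K E Ω ≤ perK K F Ω + ENNReal.ofReal Λ * volume (symmDiff E F) ^ (1 - ξ)

/-- The slab `A_{L₁,L₂,R}` around the hyperplane orthogonal to `p`. -/
def slabA {n : ℕ} (p : Euc n) (L₁ L₂ R : ℝ) : Set (Euc n) :=
  {x | L₁ < |⟪x, p⟫| ∧ |⟪x, p⟫| < L₂ ∧ ‖x - ⟪x, p⟫ • p‖ < R}


/-- The standing assumptions on the forcing term `g`: bounded (in `L^∞`),
`ℤⁿ`-periodic and with zero average on the unit cube. -/
def GoodForcing {n : ℕ} (g : Euc n → ℝ) : Prop :=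
  MeasureTheory.MemLp g ⊤ (volume : Measure (Euc n)) ∧ ZPeriodic g ∧
    (∫ x in Qcube n, g x) = 0

/-!
On a unit cube `C = k + Q ⊆ B_R` put `a = |C ∩ F|` and `b = |C \ F|`, so that `a + b = 1`.
Since `g` has zero mean on `C`, `∫_{C ∩ F} g = -∫_{C \ F} g`, hence
`|∫_{C ∩ F} g| ≤ (κ₃/2) min(a, b) ≤ κ₃ a b`. By translation invariance `K ≥ κ₃` on `C × C`, so
the interaction of `C ∩ F` with `C \ F` alone is already at least `κ₃ a b`. Summing over the
disjoint cubes inside `B_R`, the interaction term dominates `|∫_{𝒬(B_R)₁ ∩ F} g|`.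
-/

section CubeEnergy

variable {α : Type*} [MeasurableSpace α] {μ : Measure α}

lemma abs_le_two_mul_mul_of_abs_le_mul {t M a b : ℝ} (hab : a + b = 1)
    (ha : |t| ≤ M * a) (hb : |t| ≤ M * b) : |t| ≤ 2 * M * a * b := by
  have ht := abs_nonneg t
  rcases le_total a b with h | h
  · nlinarith [mul_nonneg (ht.trans ha) (by linarith : 0 ≤ 2 * b - 1)]
  · nlinarith [mul_nonneg (ht.trans hb) (by linarith : 0 ≤ 2 * a - 1)]

lemma ae_norm_le_of_eLpNorm_top_le {g : α → ℝ} {M : ℝ} (hM : 0 ≤ M)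
    (h : eLpNorm g ⊤ μ ≤ ENNReal.ofReal M) : ∀ᵐ x ∂μ, ‖g x‖ ≤ M := by
  filter_upwards [ae_le_eLpNormEssSup (f := g) (μ := μ)] with x hx
  rw [← eLpNorm_exponent_top] at hx
  rw [← ENNReal.ofReal_le_ofReal_iff hM, ofReal_norm]
  exact hx.trans h

lemma abs_setIntegral_inter_le {g : α → ℝ} {C F : Set α} {M : ℝ} (hC : μ C = 1)
    (hF : MeasurableSet F) (hgC : IntegrableOn g C μ) (hg₀ : ∫ x in C, g x ∂μ = 0)
    (hgM : ∀ᵐ x ∂μ, ‖g x‖ ≤ M) :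
    |∫ x in C ∩ F, g x ∂μ| ≤ 2 * M * μ.real (C ∩ F) * μ.real (C \ F) := by
  have hCfin : μ C < ⊤ := by simp [hC]
  have hsplit := integral_inter_add_sdiff hF hgC
  have hin : |∫ x in C ∩ F, g x ∂μ| ≤ M * μ.real (C ∩ F) :=
    norm_setIntegral_le_of_norm_le_const_ae ((measure_mono Set.inter_subset_left).trans_lt hCfin)
      (ae_restrict_of_ae hgM)
  have hout : |∫ x in C \ F, g x ∂μ| ≤ M * μ.real (C \ F) :=
    norm_setIntegral_le_of_norm_le_const_ae ((measure_mono Set.sdiff_subset).trans_lt hCfin)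
      (ae_restrict_of_ae hgM)
  rw [show ∫ x in C \ F, g x ∂μ = -∫ x in C ∩ F, g x ∂μ by linarith, abs_neg] at hout
  refine abs_le_two_mul_mul_of_abs_le_mul ?_ hin hout
  rw [measureReal_inter_add_sdiff hF hCfin.ne, measureReal_def, hC, ENNReal.toReal_one]

lemma mul_measure_le_setLIntegral_setLIntegral {K : α → α → ℝ} {κ : ℝ} {C F : Set α}
    (hC : MeasurableSet C) (hF : MeasurableSet F) (hK : ∀ x ∈ C, ∀ y ∈ C, κ ≤ K x y) :
    ENNReal.ofReal κ * μ (C ∩ F) * μ (C \ F)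
      ≤ ∫⁻ x in C ∩ F, ∫⁻ y in Fᶜ, ENNReal.ofReal (K x y) ∂μ ∂μ := by
  have hinner : ∀ x ∈ C ∩ F,
      ENNReal.ofReal κ * μ (C \ F) ≤ ∫⁻ y in Fᶜ, ENNReal.ofReal (K x y) ∂μ := fun x hx =>
    calc ENNReal.ofReal κ * μ (C \ F) = ∫⁻ _ in C \ F, ENNReal.ofReal κ ∂μ :=
          (setLIntegral_const _ _).symm
      _ ≤ ∫⁻ y in C \ F, ENNReal.ofReal (K x y) ∂μ :=
          setLIntegral_mono' (hC.diff hF) fun y hy =>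
            ENNReal.ofReal_le_ofReal (hK x hx.1 y hy.1)
      _ ≤ ∫⁻ y in Fᶜ, ENNReal.ofReal (K x y) ∂μ :=
          lintegral_mono_set (Set.sdiff_subset_compl C F)
  calc ENNReal.ofReal κ * μ (C ∩ F) * μ (C \ F)
      = ∫⁻ _ in C ∩ F, ENNReal.ofReal κ * μ (C \ F) ∂μ := by rw [setLIntegral_const]; ring
    _ ≤ _ := setLIntegral_mono' (hC.inter hF) hinner

lemma enorm_setIntegral_inter_le_setLIntegral {g : α → ℝ} {K : α → α → ℝ} {κ : ℝ}
    {C F : Set α} (hC : MeasurableSet C) (hC₁ : μ C = 1) (hF : MeasurableSet F)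
    (hgC : IntegrableOn g C μ) (hg₀ : ∫ x in C, g x ∂μ = 0) (hgκ : ∀ᵐ x ∂μ, ‖g x‖ ≤ κ / 2)
    (hK : ∀ x ∈ C, ∀ y ∈ C, κ ≤ K x y) :
    ‖∫ x in C ∩ F, g x ∂μ‖ₑ ≤ ∫⁻ x in C ∩ F, ∫⁻ y in Fᶜ, ENNReal.ofReal (K x y) ∂μ ∂μ := by
  have hfin : ∀ s ⊆ C, μ s ≠ ⊤ := fun s hs => measure_ne_top_of_subset hs (by simp [hC₁])
  calc ‖∫ x in C ∩ F, g x ∂μ‖ₑ = ENNReal.ofReal |∫ x in C ∩ F, g x ∂μ| :=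
        Real.enorm_eq_ofReal_abs _
    _ ≤ ENNReal.ofReal (κ * μ.real (C ∩ F) * μ.real (C \ F)) := by
        refine ENNReal.ofReal_le_ofReal ?_
        convert abs_setIntegral_inter_le hC₁ hF hgC hg₀ hgκ using 3
        ring
    _ = ENNReal.ofReal κ * μ (C ∩ F) * μ (C \ F) := by
        rw [ENNReal.ofReal_mul' measureReal_nonneg, ENNReal.ofReal_mul' measureReal_nonneg,
          ofReal_measureReal (hfin _ Set.inter_subset_left),
          ofReal_measureReal (hfin _ Set.sdiff_subset)]
    _ ≤ _ := mul_measure_le_setLIntegral_setLIntegral hC hF hK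

lemma EReal.coe_ennreal_add_coe_nonneg_of_enorm_le {A : ℝ≥0∞} {t : ℝ} (h : ‖t‖ₑ ≤ A) :
    0 ≤ (A : EReal) + t := by
  induction A with
  | top => simp
  | coe A =>
    have hA : |t| ≤ A := by
      rw [Real.enorm_eq_ofReal_abs] at h
      exact (ENNReal.ofReal_le_iff_le_toReal ENNReal.coe_ne_top).mp h
    have hcoe : ((A : ℝ≥0∞) : EReal) = ((A : ℝ) : EReal) := rfl
    rw [hcoe, ← EReal.coe_add]
    exact EReal.coe_nonneg.mpr (by linarith [neg_abs_le t])

end CubeEnergy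

section UnitCubes

open Function

variable {n : ℕ}

lemma Qcube_eq_preimage :
    Qcube n = (MeasurableEquiv.toLp 2 (Fin n → ℝ)).symm ⁻¹' Set.univ.pi fun _ => Set.Ioo 0 1 := by
  ext x
  simp [Qcube]

lemma measurableSet_Qcube : MeasurableSet (Qcube n) := by
  rw [Qcube_eq_preimage]
  exact (MeasurableEquiv.measurable _) (MeasurableSet.univ_pi fun _ => measurableSet_Ioo)

lemma volume_Qcube : volume (Qcube n) = 1 := by
  rw [Qcube_eq_preimage,
    (EuclideanSpace.volume_preserving_symm_measurableEquiv_toLp (Fin n)).measure_preimage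
      (MeasurableSet.univ_pi fun _ => measurableSet_Ioo).nullMeasurableSet, volume_pi_pi]
  simp

lemma measurableSet_cubeTrans (k : Fin n → ℤ) : MeasurableSet (cubeTrans k) :=
  (measurableEmbedding_addRight (intVec k)).measurableSet_image.mpr measurableSet_Qcube

lemma volume_cubeTrans (k : Fin n → ℤ) : volume (cubeTrans k) = 1 := by
  rw [cubeTrans, Set.image_add_right, measure_preimage_add_right, volume_Qcube]

lemma floor_eq_of_mem_cubeTrans {k : Fin n → ℤ} {x : Euc n} (hx : x ∈ cubeTrans k) (i : Fin n) :
    ⌊x i⌋ = k i := by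
  obtain ⟨q, hq, rfl⟩ := hx
  obtain ⟨h₀, h₁⟩ := hq i
  rw [Int.floor_eq_iff]
  simp only [PiLp.add_apply, intVec]
  constructor <;> simp <;> linarith

lemma pairwise_disjoint_cubeTrans :
    Pairwise (Disjoint on (cubeTrans : (Fin n → ℤ) → Set (Euc n))) :=
  fun _ _ hne => Set.disjoint_left.mpr fun _ hx hx' => hne <| funext fun i =>
    (floor_eq_of_mem_cubeTrans hx i).symm.trans (floor_eq_of_mem_cubeTrans hx' i)

lemma setIntegral_cubeTrans {g : Euc n → ℝ} (hg : ZPeriodic g) (k : Fin n → ℤ) :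
    ∫ x in cubeTrans k, g x = ∫ x in Qcube n, g x := by
  rw [cubeTrans, (measurePreserving_add_right volume (intVec k)).setIntegral_image_emb
    (measurableEmbedding_addRight (intVec k))]
  exact setIntegral_congr_fun measurableSet_Qcube fun x _ => hg k x

lemma unitCubes_subset (Ω : Set (Euc n)) : unitCubes n Ω ⊆ Ω :=
  Set.iUnion₂_subset fun _ hk => hk

lemma IsAdmissibleKernel.le_of_mem_cubeTrans {s₁ s₂ δ κ₁ κ₂ κ₃ : ℝ} {K : Euc n → Euc n → ℝ}
    (hK : IsAdmissibleKernel n s₁ s₂ δ κ₁ κ₂ κ₃ K) (k : Fin n → ℤ) :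
    ∀ x ∈ cubeTrans k, ∀ y ∈ cubeTrans k, κ₃ ≤ K x y := by
  rintro _ ⟨x, hx, rfl⟩ _ ⟨y, hy, rfl⟩
  rw [hK.transl]
  exact hK.lowerQ x hx y hy

lemma enorm_setIntegral_unitCubes_inter_le {Ω F : Set (Euc n)} {g : Euc n → ℝ}
    {K : Euc n → Euc n → ℝ} {κ : ℝ} (hΩ : volume Ω ≠ ⊤) (hF : MeasurableSet F)
    (hgm : AEStronglyMeasurable g volume) (hgper : ZPeriodic g)
    (hg₀ : ∫ x in Qcube n, g x = 0) (hgκ : ∀ᵐ x, ‖g x‖ ≤ κ / 2)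
    (hK : ∀ k, ∀ x ∈ cubeTrans k, ∀ y ∈ cubeTrans k, κ ≤ K x y) :
    ‖∫ x in unitCubes n Ω ∩ F, g x‖ₑ
      ≤ ∫⁻ x in F ∩ Ω, ∫⁻ y in Fᶜ, ENNReal.ofReal (K x y) := by
  set S := {k : Fin n → ℤ | cubeTrans k ⊆ Ω}
  have hU : unitCubes n Ω ∩ F = ⋃ k : S, cubeTrans k.1 ∩ F := by
    rw [unitCubes, Set.biUnion_eq_iUnion, Set.iUnion_inter]
  have hUΩ : unitCubes n Ω ∩ F ⊆ F ∩ Ω := fun _ hx => ⟨hx.2, unitCubes_subset Ω hx.1⟩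
  have hm : ∀ k : S, MeasurableSet (cubeTrans k.1 ∩ F) :=
    fun k => (measurableSet_cubeTrans k.1).inter hF
  have hd : Pairwise (Disjoint on fun k : S => cubeTrans k.1 ∩ F) :=
    (pairwise_disjoint_cubeTrans.comp_of_injective Subtype.val_injective).mono
      fun _ _ h => h.mono Set.inter_subset_left Set.inter_subset_left
  have hint : ∀ s ⊆ Ω, IntegrableOn g s :=
    fun s hs => Measure.integrableOn_of_bounded (measure_ne_top_of_subset hs hΩ) hgm
      (ae_restrict_of_ae hgκ)
  calc ‖∫ x in unitCubes n Ω ∩ F, g x‖ₑ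
      = ‖∑' k : S, ∫ x in cubeTrans k.1 ∩ F, g x‖ₑ := by
        rw [← integral_iUnion hm hd, hU]
        exact hU ▸ hint _ fun x hx => (hUΩ hx).2
    _ ≤ ∑' k : S, ‖∫ x in cubeTrans k.1 ∩ F, g x‖ₑ := enorm_tsum_le_tsum_enorm
    _ ≤ ∑' k : S, ∫⁻ x in cubeTrans k.1 ∩ F, ∫⁻ y in Fᶜ, ENNReal.ofReal (K x y) :=
        ENNReal.tsum_le_tsum fun k =>
          enorm_setIntegral_inter_le_setLIntegral (measurableSet_cubeTrans k.1)
            (volume_cubeTrans k.1) hF (hint _ k.2) (by rw [setIntegral_cubeTrans hgper, hg₀])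
            hgκ (hK k.1)
    _ = ∫⁻ x in unitCubes n Ω ∩ F, ∫⁻ y in Fᶜ, ENNReal.ofReal (K x y) := by
        rw [hU, lintegral_iUnion hm hd]
    _ ≤ ∫⁻ x in F ∩ Ω, ∫⁻ y in Fᶜ, ENNReal.ofReal (K x y) := lintegral_mono_set hUΩ

end UnitCubes

theorem energy_nonneg_in_large_balls_general
    (n : ℕ) (s₁ s₂ δ κ₁ κ₂ κ₃ : ℝ)
    (K : Euc n → Euc n → ℝ) (hK : IsAdmissibleKernel n s₁ s₂ δ κ₁ κ₂ κ₃ K)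
    (g : Euc n → ℝ) (hg : GoodForcing g)
    (hgsmall : eLpNorm g ⊤ (volume : Measure (Euc n)) ≤ ENNReal.ofReal (κ₃ / 2))
    (F : Set (Euc n)) (hF : MeasurableSet F) (R : ℝ) :
    (0 : EReal)
      ≤ ((∫⁻ x in F ∩ Metric.ball (0 : Euc n) R, ∫⁻ y in Fᶜ,
            ENNReal.ofReal (K x y)) : EReal)
        + (((∫ x in unitCubes n (Metric.ball (0 : Euc n) R) ∩ F, g x) : ℝ) : EReal) := by
  obtain ⟨hgLp, hgper, hg₀⟩ := hg
  have hgκ : ∀ᵐ x, ‖g x‖ ≤ κ₃ / 2 := 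
    ae_norm_le_of_eLpNorm_top_le (half_pos hK.κ₃_pos).le hgsmall
  exact EReal.coe_ennreal_add_coe_nonneg_of_enorm_le <|
    enorm_setIntegral_unitCubes_inter_le measure_ball_lt_top.ne hF hgLp.1 hgper hg₀ hgκ
      hK.le_of_mem_cubeTrans

/-- The energy `𝔈(F, B_R)` is nonnegative in every large ball. -/
theorem energy_nonneg_in_large_balls
    (n : ℕ) (hn : 1 ≤ n) (s₁ s₂ δ κ₁ κ₂ κ₃ : ℝ)
    (K : Euc n → Euc n → ℝ) (hK : IsAdmissibleKernel n s₁ s₂ δ κ₁ κ₂ κ₃ K)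
    (g : Euc n → ℝ) (hg : GoodForcing g)
    (hgsmall : eLpNorm g ⊤ (volume : Measure (Euc n)) ≤ ENNReal.ofReal (κ₃ / 2))
    (F : Set (Euc n)) (hF : MeasurableSet F) (R : ℝ) (hR : 1 < R) :
    (0 : EReal)
      ≤ ((∫⁻ x in F ∩ Metric.ball (0 : Euc n) R, ∫⁻ y in Fᶜ,
            ENNReal.ofReal (K x y)) : EReal)
        + (((∫ x in unitCubes n (Metric.ball (0 : Euc n) R) ∩ F, g x) : ℝ) : EReal) :=
  energy_nonneg_in_large_balls_general n s₁ s₂ δ κ₁ κ₂ κ₃ K hK g hg hgsmall F hF R
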